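/- (Strict extended Hadamard inequality) Let n ≥ 3 and let A = (a_{ij}) be an n×n real symmetric matrix such that every (n−1)×(n−1) principal submatrix of A is positive definite and det(A) < 0. Then det(A) > −(1/(n−2))·((n−1)/(n−2))^(n−1) · a_{11}·a_{22}···a_{nn}. -/

import Mathlib

/-!
Rescaling by a positive diagonal matrix reduces to the case `a_ii = 1`. Positivity of the form on
every coordinate hyperplane allows at most one nonpositive eigenvalue (a plane spanned by two
eigenvectors meets each hyperplane), so `det A < 0` forces exactly one negative eigenvalue `-a`.
For its unit eigenvector `v`, the form at `v - v_i e_i` gives `a (1 - 2 v_i²) < v_i²`; summing over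
`i` yields `a (n - 2) < 1`. The remaining eigenvalues sum to `n + a`, so by AM-GM their product is
at most `((n + a) / (n - 1))^(n-1) < ((n - 1) / (n - 2))^(n-1)`, and `det A = -a` times it.
-/

open Matrix Finset

theorem Finset.prod_le_sum_div_card_pow {ι : Type*} (s : Finset ι) (z : ι → ℝ)
    (hz : ∀ i ∈ s, 0 ≤ z i) : ∏ i ∈ s, z i ≤ ((∑ i ∈ s, z i) / #s) ^ #s := by
  rcases s.eq_empty_or_nonempty with rfl | hs
  · simp
  have hcard : (0 : ℝ) < #s := by exact_mod_cast hs.card_pos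
  have amgm := Real.geom_mean_le_arith_mean s (fun _ => 1) z (fun _ _ => zero_le_one)
    (by simpa using hcard) hz
  simp only [Real.rpow_one, one_mul, sum_const, nsmul_eq_mul, mul_one] at amgm
  have hprod : 0 ≤ ∏ i ∈ s, z i := prod_nonneg hz
  calc ∏ i ∈ s, z i = ((∏ i ∈ s, z i) ^ (#s : ℝ)⁻¹) ^ #s := by
        rw [← Real.rpow_mul_natCast hprod, inv_mul_cancel₀ hcard.ne', Real.rpow_one]
    _ ≤ ((∑ i ∈ s, z i) / #s) ^ #s := by gcongr

noncomputable def extendedHadamardConst (n : ℕ) : ℝ :=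
  1 / (n - 2) * ((n - 1) / (n - 2)) ^ (n - 1)

theorem mul_lt_extendedHadamardConst {n : ℕ} (hn : 3 ≤ n) {a P : ℝ} (ha : 0 < a)
    (han : a * (n - 2) < 1) (hP : P ≤ ((n + a) / (n - 1)) ^ (n - 1)) :
    a * P < extendedHadamardConst n := by
  have hn2 : (0 : ℝ) < n - 2 := by
    have : (3 : ℝ) ≤ n := by exact_mod_cast hn
    linarith
  have hn1 : (0 : ℝ) < n - 1 := by linarith
  have hbase : (n + a) / (n - 1) ≤ (n - 1) / (n - 2) := by
    rw [div_le_div_iff₀ hn1 hn2]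
    nlinarith
  calc a * P ≤ a * ((n - 1) / (n - 2)) ^ (n - 1) := by
        gcongr
        exact hP.trans (pow_le_pow_left₀ (by positivity) hbase _)
    _ < 1 / (n - 2) * ((n - 1) / (n - 2)) ^ (n - 1) := by
        gcongr
        rwa [lt_div_iff₀ hn2]

namespace Matrix

variable {ι : Type*} [Fintype ι] [DecidableEq ι]

theorem IsHermitian.eigenvectorBasis_dotProduct {A : Matrix ι ι ℝ} (hA : A.IsHermitian)
    (a b : ι) :
    (hA.eigenvectorBasis a).ofLp ⬝ᵥ (hA.eigenvectorBasis b).ofLp = if a = b then 1 else 0 := by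
  rw [← orthonormal_iff_ite.mp hA.eigenvectorBasis.orthonormal a b,
    EuclideanSpace.inner_eq_star_dotProduct, star_trivial, dotProduct_comm]

def PosOnCoordHyperplanes (A : Matrix ι ι ℝ) : Prop :=
  ∀ (i : ι) (y : ι → ℝ), y ≠ 0 → y i = 0 → 0 < y ⬝ᵥ A *ᵥ y

theorem posOnCoordHyperplanes_of_posDef_submatrix {A : Matrix ι ι ℝ}
    (hA : ∀ i : ι, (A.submatrix (fun j : {j : ι // j ≠ i} => (j : ι))
      (fun j : {j : ι // j ≠ i} => (j : ι))).PosDef) :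
    A.PosOnCoordHyperplanes := by
  intro i y hy hyi
  have sum_ne (f : ι → ℝ) (hf : f i = 0) : ∑ j : {j // j ≠ i}, f j = ∑ j, f j := by
    rw [← sum_subtype (univ.erase i) (by simp) f, sum_erase univ hf]
  have hz : (fun j : {j // j ≠ i} => y j) ≠ 0 := by
    obtain ⟨j, hj⟩ := Function.ne_iff.mp hy
    have hji : j ≠ i := by rintro rfl; exact hj hyi
    exact Function.ne_iff.mpr ⟨⟨j, hji⟩, hj⟩
  refine ((hA i).dotProduct_mulVec_pos hz).trans_eq ?_
  simp only [star_trivial, dotProduct, mulVec, submatrix_apply]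
  rw [← sum_ne _ (by simp [hyi])]
  refine sum_congr rfl fun j _ => ?_
  rw [← sum_ne _ (by simp [hyi])]

namespace PosOnCoordHyperplanes

variable {A : Matrix ι ι ℝ}

theorem diag_pos [Nontrivial ι] (h : A.PosOnCoordHyperplanes) (i : ι) : 0 < A i i := by
  obtain ⟨j, hj⟩ := exists_ne i
  simpa [mulVec_single_one] using
    h j (Pi.single i 1) (by simp) (Pi.single_eq_of_ne hj 1)

theorem diagonal_mul_mul_diagonal (h : A.PosOnCoordHyperplanes) {d : ι → ℝ}
    (hd : ∀ i, d i ≠ 0) : (diagonal d * A * diagonal d).PosOnCoordHyperplanes := by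
  intro i y hy hyi
  have hdy : d * y ≠ 0 := fun h0 => hy <| funext fun j => by
    simpa [hd j] using congrFun h0 j
  convert h i (d * y) hdy (by simp [hyi]) using 1
  simp only [dotProduct, mulVec, mul_diagonal, diagonal_mul, Pi.mul_apply, mul_sum]
  exact sum_congr rfl fun j _ => sum_congr rfl fun k _ => by ring

theorem eigenvalues_pos_of_ne (h : A.PosOnCoordHyperplanes) (hA : A.IsHermitian) {a b : ι}
    (hab : a ≠ b) (ha : hA.eigenvalues a ≤ 0) : 0 < hA.eigenvalues b := by
  set u := fun j => (hA.eigenvectorBasis j).ofLp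
  have dot (c₁ c₂ : ℝ) :
      (c₁ • u a + c₂ • u b) ⬝ᵥ u a = c₁ ∧ (c₁ • u a + c₂ • u b) ⬝ᵥ u b = c₂ := by
    simp [u, add_dotProduct, hA.eigenvectorBasis_dotProduct, hab, hab.symm]
  have form (c₁ c₂ : ℝ) : (c₁ • u a + c₂ • u b) ⬝ᵥ A *ᵥ (c₁ • u a + c₂ • u b)
      = c₁ ^ 2 * hA.eigenvalues a + c₂ ^ 2 * hA.eigenvalues b := by
    simp only [mulVec_add, mulVec_smul, u, hA.mulVec_eigenvectorBasis, dotProduct_add,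
      dotProduct_smul, smul_eq_mul, dot]
    ring
  obtain ⟨c₁, c₂, hc, hca⟩ :
      ∃ c₁ c₂ : ℝ, (c₁ ≠ 0 ∨ c₂ ≠ 0) ∧ c₁ * u a a + c₂ * u b a = 0 := by
    by_cases h0 : u a a = 0
    · exact ⟨1, 0, by simp, by simp [h0]⟩
    · exact ⟨u b a, -u a a, Or.inr (neg_ne_zero.mpr h0), by ring⟩
  have hne : c₁ • u a + c₂ • u b ≠ 0 := by
    intro h0
    have hc' := dot c₁ c₂
    simp only [h0, zero_dotProduct] at hc'
    rcases hc with hc | hc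
    · exact hc hc'.1.symm
    · exact hc hc'.2.symm
  have hpos := h a _ hne (by simpa using hca)
  rw [form] at hpos
  by_contra! hb
  nlinarith [sq_nonneg c₁, sq_nonneg c₂]

theorem exists_eigenvalue_neg (h : A.PosOnCoordHyperplanes) (hA : A.IsHermitian)
    (hdet : A.det < 0) : ∃ i₀, hA.eigenvalues i₀ < 0 ∧ ∀ i ≠ i₀, 0 < hA.eigenvalues i := by
  have hdet' : ∏ i, hA.eigenvalues i < 0 := by simpa [hA.det_eq_prod_eigenvalues] using hdet
  obtain ⟨i₀, hi₀⟩ : ∃ i₀, hA.eigenvalues i₀ < 0 := by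
    by_contra! hnn
    exact (prod_nonneg fun i _ => hnn i).not_gt hdet'
  exact ⟨i₀, hi₀, fun i hi => h.eigenvalues_pos_of_ne hA hi.symm hi₀.le⟩

/-- Test the form on `v - v i • eᵢ`, which vanishes at `i`. -/
theorem pos_of_mulVec_eq_smul [Nontrivial ι] (h : A.PosOnCoordHyperplanes) (hA : A.IsSymm)
    {μ : ℝ} (hμ : μ < 0) {v : ι → ℝ} (hv : A *ᵥ v = μ • v) (hv1 : v ⬝ᵥ v = 1) (i : ι) :
    0 < μ * (1 - 2 * v i ^ 2) + v i ^ 2 * A i i := by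
  set e : ι → ℝ := Pi.single i 1
  have hev : e ⬝ᵥ v = v i := single_one_dotProduct i v
  have hve : v ⬝ᵥ A *ᵥ e = μ * v i := by
    rw [dotProduct_mulVec, ← mulVec_transpose, hA.eq, dotProduct_comm, hv, dotProduct_smul,
      hev, smul_eq_mul]
  have hee : e ⬝ᵥ A *ᵥ e = A i i := by simp [e]
  have hx : v - v i • e ≠ 0 := by
    intro h0
    have hvμ : v ⬝ᵥ A *ᵥ v = μ := by rw [hv, dotProduct_smul, hv1, smul_eq_mul, mul_one]
    rw [sub_eq_zero.mp h0, mulVec_smul, dotProduct_smul, smul_dotProduct, hee] at hvμ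
    have := h.diag_pos i
    simp only [smul_eq_mul] at hvμ
    nlinarith [sq_nonneg (v i)]
  have hpos := h i _ hx (by simp [e])
  convert hpos using 1
  simp only [mulVec_sub, mulVec_smul, dotProduct_sub, sub_dotProduct, dotProduct_smul,
    smul_dotProduct, smul_eq_mul, hve, hee, hv, hev, hv1]
  ring

theorem neg_extendedHadamardConst_lt_det_of_diag_eq_one (h : A.PosOnCoordHyperplanes)
    (hA : A.IsHermitian) (hn : 3 ≤ Fintype.card ι) (hdiag : ∀ i, A i i = 1)
    (hdet : A.det < 0) : -extendedHadamardConst (Fintype.card ι) < A.det := by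
  have : Nontrivial ι := Fintype.one_lt_card_iff_nontrivial.mp (by omega)
  obtain ⟨i₀, hneg, hpos⟩ := h.exists_eigenvalue_neg hA hdet
  set μ := hA.eigenvalues
  set v := (hA.eigenvectorBasis i₀).ofLp
  set n := Fintype.card ι
  have hv1 : v ⬝ᵥ v = 1 := by simpa using hA.eigenvectorBasis_dotProduct i₀ i₀
  have hsq : ∑ i, v i ^ 2 = 1 := by simpa [dotProduct, sq] using hv1
  have hsmall : -μ i₀ * (n - 2) < 1 := by
    have hsum : 0 < ∑ i, (μ i₀ * (1 - 2 * v i ^ 2) + v i ^ 2 * A i i) :=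
      sum_pos (fun i _ => h.pos_of_mulVec_eq_smul hA hneg (hA.mulVec_eigenvectorBasis i₀) hv1 i)
        univ_nonempty
    simp only [hdiag, mul_one, sum_add_distrib, ← mul_sum, mul_sub, sum_sub_distrib,
      sum_const, card_univ, nsmul_eq_mul, hsq] at hsum
    linarith
  have hsum : ∑ i ∈ univ.erase i₀, μ i = n + -μ i₀ := by
    have htr : ∑ i, μ i = n := by
      simpa [μ, trace, hdiag] using hA.trace_eq_sum_eigenvalues.symm
    rw [← htr, ← add_sum_erase univ μ (mem_univ i₀)]
    ring
  have hcard : ((#(univ.erase i₀) : ℕ) : ℝ) = n - 1 := by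
    rw [card_erase_of_mem (mem_univ i₀), card_univ, Nat.cast_sub (by omega), Nat.cast_one]
  have hamgm := prod_le_sum_div_card_pow (univ.erase i₀) μ
    fun i hi => (hpos i (ne_of_mem_erase hi)).le
  rw [hsum, hcard, card_erase_of_mem (mem_univ i₀), card_univ] at hamgm
  have hdetμ : A.det = μ i₀ * ∏ i ∈ univ.erase i₀, μ i := by
    rw [mul_prod_erase univ μ (mem_univ i₀)]
    simpa using hA.det_eq_prod_eigenvalues
  have := mul_lt_extendedHadamardConst hn (neg_pos.mpr hneg) hsmall hamgm
  linarith

theorem neg_extendedHadamardConst_mul_prod_diag_lt_det (h : A.PosOnCoordHyperplanes)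
    (hA : A.IsHermitian) (hn : 3 ≤ Fintype.card ι) (hdet : A.det < 0) :
    -extendedHadamardConst (Fintype.card ι) * ∏ i, A i i < A.det := by
  have : Nontrivial ι := Fintype.one_lt_card_iff_nontrivial.mp (by omega)
  set d : ι → ℝ := fun i => (√(A i i))⁻¹
  have hd : ∀ i, 0 < d i := fun i => inv_pos.mpr (Real.sqrt_pos.mpr (h.diag_pos i))
  have hdd : ∀ i, d i * A i i * d i = 1 := fun i => by
    rw [mul_comm, ← mul_assoc, ← sq, inv_pow, Real.sq_sqrt (h.diag_pos i).le,
      inv_mul_cancel₀ (h.diag_pos i).ne']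
  set B := diagonal d * A * diagonal d
  have hB : B.IsHermitian := by
    simpa [diagonal_conjTranspose] using isHermitian_mul_mul_conjTranspose (diagonal d) hA
  have hdetB : B.det = (∏ i, d i) ^ 2 * A.det := by
    simp only [B, det_mul, det_diagonal]
    ring
  have hprod : (∏ i, d i) ^ 2 * ∏ i, A i i = 1 := by
    rw [← prod_pow, ← prod_mul_distrib]
    exact prod_eq_one fun i _ => by rw [← hdd i]; ring
  have hBdet : B.det < 0 :=
    hdetB ▸ mul_neg_of_pos_of_neg (pow_pos (prod_pos fun i _ => hd i) 2) hdet
  have hBbound := (h.diagonal_mul_mul_diagonal fun i => (hd i).ne')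
    |>.neg_extendedHadamardConst_lt_det_of_diag_eq_one hB hn (by simp [hdd]) hBdet
  have hAB : A.det = B.det * ∏ i, A i i := by
    rw [hdetB, mul_comm _ A.det, mul_assoc, hprod, mul_one]
  rw [hAB]
  exact mul_lt_mul_of_pos_right hBbound (prod_pos fun i _ => h.diag_pos i)

end PosOnCoordHyperplanes

end Matrix

/-- Strict extended Hadamard inequality for `(n-1)`-locally positive definite matrices. -/
theorem extended_hadamard_strict
    (n : ℕ) (hn : 3 ≤ n) (A : Matrix (Fin n) (Fin n) ℝ) (hA : A.IsHermitian)
    (hloc : ∀ i : Fin n,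
      (A.submatrix (fun j : {j : Fin n // j ≠ i} => (j : Fin n))
        (fun j : {j : Fin n // j ≠ i} => (j : Fin n))).PosDef)
    (hdet : A.det < 0) :
    A.det > -(1 / ((n : ℝ) - 2)) * (((n : ℝ) - 1) / ((n : ℝ) - 2)) ^ (n - 1) *
      ∏ i : Fin n, A i i := by
  have hbound := (posOnCoordHyperplanes_of_posDef_submatrix hloc)
    |>.neg_extendedHadamardConst_mul_prod_diag_lt_det hA (by simpa using hn) hdet
  simpa [extendedHadamardConst] using hbound
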